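/- Let n = rK and let ξ₁,…,ξᵣ ∈ {0,1}ⁿ be indicator vectors of a partition of [n] into r clusters of size K, with Z* = ∑ₖ ξₖξₖᵀ. Suppose there exist: a diagonal matrix D* with all diagonal entries positive; a symmetric matrix B* ≥ 0 entrywise with B*ᵢⱼ > 0 whenever i,j are in distinct clusters and B*ᵢⱼZ*ᵢⱼ = 0 for all i,j; and λ* ∈ ℝⁿ; such that S* := D* - B* - A + λ*𝟏ᵀ + 𝟏(λ*)ᵀ is positive semidefinite and S*ξₖ = 0 for all k ∈ [r]. Then Z* is the unique maximizer of ⟨A,Z⟩ over symmetric positive semidefinite Z with Zᵢᵢ = 1, Zᵢⱼ ≥ 0 for all i,j, and Z𝟏 = K𝟏. -/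

import Mathlib

/-!
Weak duality: for every feasible `Z` the certificate gives
`⟨A, Z⟩ = ∑ dᵢ + 2K ∑ λᵢ - ⟨B, Z⟩ - ⟨S, Z⟩`, where both subtracted terms are nonnegative
(`B ≥ 0`, `Z ≥ 0`, and `S, Z ⪰ 0`) and both vanish at `Z*` (complementary slackness
`B ∘ Z* = 0`, and `Z* = ∑ ξₖξₖᵀ` with `S ξₖ = 0`). At an optimal `Z` this forces `⟨B, Z⟩ = 0`,
so `Z` vanishes off the clusters; as `Zᵢⱼ ≤ 1` and each row sums to `K` over a cluster of
size `K`, `Z` is `1` on the clusters too.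
-/

open Matrix

def traceInner {n : ℕ} (A Z : Matrix (Fin n) (Fin n) ℝ) : ℝ :=
  ∑ i, ∑ j, A i j * Z i j

namespace Matrix

variable {ι : Type*}

theorem PosSemidef.transpose_eq_self {Z : Matrix ι ι ℝ} (hZ : Z.PosSemidef) : Zᵀ = Z := by
  simpa using hZ.isHermitian.eq

variable [Fintype ι]

theorem PosSemidef.exists_eq_sum_vecMulVec_self {Z : Matrix ι ι ℝ} (hZ : Z.PosSemidef) :
    ∃ (m : ℕ) (v : Fin m → ι → ℝ), Z = ∑ k, vecMulVec (v k) (v k) := by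
  simpa using posSemidef_iff_eq_sum_vecMulVec.mp hZ

theorem PosSemidef.two_mul_apply_le {Z : Matrix ι ι ℝ} (hZ : Z.PosSemidef) (i j : ι) :
    2 * Z i j ≤ Z i i + Z j j := by
  obtain ⟨m, v, rfl⟩ := hZ.exists_eq_sum_vecMulVec_self
  simp only [sum_apply, vecMulVec_apply, Finset.mul_sum, ← Finset.sum_add_distrib]
  exact Finset.sum_le_sum fun k _ => by nlinarith [sq_nonneg (v k i - v k j)]

end Matrix

section clusterMatrix

variable {ι κ : Type*} [DecidableEq κ]

def clusterMatrix (c : ι → κ) : Matrix ι ι ℝ :=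
  of fun i j => if c i = c j then 1 else 0

theorem clusterMatrix_apply_self (c : ι → κ) (i : ι) : clusterMatrix c i i = 1 := by
  simp [clusterMatrix]

theorem transpose_clusterMatrix (c : ι → κ) : (clusterMatrix c)ᵀ = clusterMatrix c := by
  ext i j
  simp [clusterMatrix, eq_comm]

theorem clusterMatrix_eq_sum_vecMulVec [Fintype κ] (c : ι → κ) :
    clusterMatrix c = ∑ k, vecMulVec (fun i => if c i = k then 1 else 0)
      (fun i => if c i = k then 1 else 0) := by
  ext i j
  simp [clusterMatrix, Matrix.sum_apply, vecMulVec_apply, eq_comm]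

variable [Fintype ι]

theorem clusterMatrix_mulVec_one {c : ι → κ} {K : ℕ}
    (hsize : ∀ k, (Finset.univ.filter fun i => c i = k).card = K) :
    clusterMatrix c *ᵥ (fun _ => 1) = fun _ => (K : ℝ) := by
  ext i
  simp only [clusterMatrix, mulVec, dotProduct, of_apply, mul_one, eq_comm (a := c i)]
  simp [Finset.sum_boole, hsize]

theorem eq_clusterMatrix_of_mulVec_one {c : ι → κ} {K : ℕ}
    (hsize : ∀ k, (Finset.univ.filter fun i => c i = k).card = K) {Z : Matrix ι ι ℝ}
    (hle : ∀ i j, Z i j ≤ 1) (hoff : ∀ i j, c i ≠ c j → Z i j = 0)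
    (hrow : Z *ᵥ (fun _ => 1) = fun _ => (K : ℝ)) : Z = clusterMatrix c := by
  have hgap : ∀ i j, 0 ≤ clusterMatrix c i j - Z i j := fun i j => by
    by_cases h : c i = c j <;> simp [clusterMatrix, h, hle, hoff]
  ext i j
  have hsum : ∑ j, (clusterMatrix c i j - Z i j) = 0 := by
    have := congrFun (clusterMatrix_mulVec_one hsize) i
    have := congrFun hrow i
    simp_all [mulVec, dotProduct, Finset.sum_sub_distrib]
  exact (sub_eq_zero.mp (congrFun ((Fintype.sum_eq_zero_iff_of_nonneg (hgap i)).mp hsum) j)).symm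
  
end clusterMatrix

section traceInner

variable {n : ℕ}

theorem traceInner_add_left (A B Z : Matrix (Fin n) (Fin n) ℝ) :
    traceInner (A + B) Z = traceInner A Z + traceInner B Z := by
  simp [traceInner, add_mul, Finset.sum_add_distrib]

theorem traceInner_sub_left (A B Z : Matrix (Fin n) (Fin n) ℝ) :
    traceInner (A - B) Z = traceInner A Z - traceInner B Z := by
  simp [traceInner, sub_mul, Finset.sum_sub_distrib]

theorem traceInner_sum_right {α : Type*} (s : Finset α) (A : Matrix (Fin n) (Fin n) ℝ)
    (Z : α → Matrix (Fin n) (Fin n) ℝ) :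
    traceInner A (∑ k ∈ s, Z k) = ∑ k ∈ s, traceInner A (Z k) := by
  simp only [traceInner, Matrix.sum_apply, Finset.mul_sum]
  exact (Finset.sum_congr rfl fun _ _ => Finset.sum_comm).trans Finset.sum_comm

theorem traceInner_vecMulVec (A : Matrix (Fin n) (Fin n) ℝ) (x y : Fin n → ℝ) :
    traceInner A (vecMulVec x y) = x ⬝ᵥ A *ᵥ y := by
  simp only [traceInner, vecMulVec_apply, dotProduct, mulVec, Finset.mul_sum]
  exact Finset.sum_congr rfl fun _ _ => Finset.sum_congr rfl fun _ _ => by ring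

theorem traceInner_diagonal (d : Fin n → ℝ) (Z : Matrix (Fin n) (Fin n) ℝ) :
    traceInner (diagonal d) Z = ∑ i, d i * Z i i := by
  simp [traceInner, diagonal_apply, ite_mul]

theorem traceInner_of_add (u : Fin n → ℝ) (Z : Matrix (Fin n) (Fin n) ℝ) :
    traceInner (of fun i j => u i + u j) Z = u ⬝ᵥ Z *ᵥ (fun _ => 1) + u ⬝ᵥ Zᵀ *ᵥ (fun _ => 1) := by
  simp only [traceInner, of_apply, add_mul, Finset.sum_add_distrib, dotProduct, mulVec,
    transpose_apply, mul_one, Finset.mul_sum]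
  rw [Finset.sum_comm (f := fun i j => u j * Z i j)]

theorem traceInner_nonneg_of_posSemidef {S Z : Matrix (Fin n) (Fin n) ℝ}
    (hS : S.PosSemidef) (hZ : Z.PosSemidef) : 0 ≤ traceInner S Z := by
  obtain ⟨m, v, rfl⟩ := hZ.exists_eq_sum_vecMulVec_self
  rw [traceInner_sum_right]
  exact Finset.sum_nonneg fun k _ => by
    simpa [traceInner_vecMulVec] using hS.dotProduct_mulVec_nonneg (v k)

theorem traceInner_nonneg_of_nonneg {B Z : Matrix (Fin n) (Fin n) ℝ}
    (hB : ∀ i j, 0 ≤ B i j) (hZ : ∀ i j, 0 ≤ Z i j) : 0 ≤ traceInner B Z :=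
  Finset.sum_nonneg fun i _ => Finset.sum_nonneg fun j _ => mul_nonneg (hB i j) (hZ i j)

theorem mul_eq_zero_of_traceInner_eq_zero {B Z : Matrix (Fin n) (Fin n) ℝ}
    (hB : ∀ i j, 0 ≤ B i j) (hZ : ∀ i j, 0 ≤ Z i j) (h : traceInner B Z = 0) (i j : Fin n) :
    B i j * Z i j = 0 := by
  have hrow := (Fintype.sum_eq_zero_iff_of_nonneg fun i =>
    Finset.sum_nonneg fun j _ => mul_nonneg (hB i j) (hZ i j)).mp h
  exact congrFun ((Fintype.sum_eq_zero_iff_of_nonneg fun j => mul_nonneg (hB i j) (hZ i j)).mp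
    (congrFun hrow i)) j

theorem traceInner_eq_dual_objective_sub {A B S Z : Matrix (Fin n) (Fin n) ℝ} {d lam : Fin n → ℝ}
    {K : ℕ} (hS : S = diagonal d - B - A + of fun i j => lam i + lam j) (hdiag : ∀ i, Z i i = 1)
    (hsymm : Zᵀ = Z) (hrow : Z *ᵥ (fun _ => 1) = fun _ => (K : ℝ)) :
    traceInner A Z = ∑ i, d i + 2 * K * ∑ i, lam i - traceInner B Z - traceInner S Z := by
  rw [show A = diagonal d - B + (of fun i j => lam i + lam j) - S by rw [hS]; abel,
    traceInner_sub_left, traceInner_add_left, traceInner_sub_left, traceInner_diagonal,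
    traceInner_of_add, hsymm, hrow]
  simp only [hdiag, mul_one, dotProduct, ← Finset.sum_mul]
  ring

end traceInner

theorem sdp_dual_certificate_r_clusters_general {n r K : ℕ}
    (c : Fin n → Fin r)
    (hsize : ∀ k : Fin r, (Finset.univ.filter fun i => c i = k).card = K)
    (ξ : Fin r → Fin n → ℝ) (hξ : ∀ k i, ξ k i = if c i = k then 1 else 0)
    (Zstar : Matrix (Fin n) (Fin n) ℝ)
    (hZstar : Zstar = Matrix.of fun i j => if c i = c j then (1 : ℝ) else 0)
    (A B : Matrix (Fin n) (Fin n) ℝ)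
    (d : Fin n → ℝ)
    (hBnn : ∀ i j, 0 ≤ B i j)
    (hBpos : ∀ i j, c i ≠ c j → 0 < B i j)
    (hBZ : ∀ i j, B i j * Zstar i j = 0)
    (lam : Fin n → ℝ)
    (S : Matrix (Fin n) (Fin n) ℝ)
    (hS : S = Matrix.diagonal d - B - A + Matrix.of (fun i j => lam i + lam j))
    (hpsd : S.PosSemidef)
    (hSξ : ∀ k, S.mulVec (ξ k) = 0) :
    ∀ Z : Matrix (Fin n) (Fin n) ℝ,
      Z.PosSemidef → (∀ i, Z i i = 1) → (∀ i j, 0 ≤ Z i j) →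
      (Z.mulVec (fun _ => 1) = fun _ => (K : ℝ)) →
        traceInner A Z ≤ traceInner A Zstar ∧
        (traceInner A Z = traceInner A Zstar → Z = Zstar) := by
  intro Z hZ hdiag hnn hrow
  obtain rfl : ξ = fun k i => if c i = k then 1 else 0 := funext₂ hξ
  change Zstar = clusterMatrix c at hZstar
  subst hZstar
  have hBZstar : traceInner B (clusterMatrix c) = 0 :=
    Finset.sum_eq_zero fun i _ => Finset.sum_eq_zero fun j _ => hBZ i j
  have hSZstar : traceInner S (clusterMatrix c) = 0 := by
    simp [clusterMatrix_eq_sum_vecMulVec, traceInner_sum_right, traceInner_vecMulVec, hSξ]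
  have hAZ := traceInner_eq_dual_objective_sub hS hdiag hZ.transpose_eq_self hrow
  have hAZstar := traceInner_eq_dual_objective_sub hS (clusterMatrix_apply_self c)
    (transpose_clusterMatrix c) (clusterMatrix_mulVec_one hsize)
  have hBZ_nonneg := traceInner_nonneg_of_nonneg hBnn hnn
  have hSZ_nonneg := traceInner_nonneg_of_posSemidef hpsd hZ
  refine ⟨by linarith, fun heq => ?_⟩
  have hBZ_zero : traceInner B Z = 0 := by linarith
  refine eq_clusterMatrix_of_mulVec_one hsize (fun i j => ?_) (fun i j hij => ?_) hrow
  · linarith [hZ.two_mul_apply_le i j, hdiag i, hdiag j]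
  · exact (mul_eq_zero.mp (mul_eq_zero_of_traceInner_eq_zero hBnn hnn hBZ_zero i j)).resolve_left
      (hBpos i j hij).ne'

/-- Dual certificate lemma for the SDP relaxation in the SBM with `r` equal-sized
clusters. The partition of `[n]` into `r` clusters of size `K` is encoded by the
cluster-assignment map `c : Fin n → Fin r`; `ξ k` is the indicator vector of cluster `k`
and `Z* = ∑ₖ ξₖξₖᵀ`. -/
theorem sdp_dual_certificate_r_clusters {n r K : ℕ}
    (hn : n = r * K)
    (c : Fin n → Fin r)
    (hsize : ∀ k : Fin r, (Finset.univ.filter fun i => c i = k).card = K)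
    (ξ : Fin r → Fin n → ℝ) (hξ : ∀ k i, ξ k i = if c i = k then 1 else 0)
    (Zstar : Matrix (Fin n) (Fin n) ℝ)
    (hZstar : Zstar = Matrix.of fun i j => if c i = c j then (1 : ℝ) else 0)
    (A B : Matrix (Fin n) (Fin n) ℝ) (hA : A.IsSymm) (hB : B.IsSymm)
    (d : Fin n → ℝ) (hd : ∀ i, 0 < d i)
    (hBnn : ∀ i j, 0 ≤ B i j)
    (hBpos : ∀ i j, c i ≠ c j → 0 < B i j)
    (hBZ : ∀ i j, B i j * Zstar i j = 0)
    (lam : Fin n → ℝ)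
    (S : Matrix (Fin n) (Fin n) ℝ)
    (hS : S = Matrix.diagonal d - B - A + Matrix.of (fun i j => lam i + lam j))
    (hpsd : S.PosSemidef)
    (hSξ : ∀ k, S.mulVec (ξ k) = 0) :
    ∀ Z : Matrix (Fin n) (Fin n) ℝ,
      Z.PosSemidef → (∀ i, Z i i = 1) → (∀ i j, 0 ≤ Z i j) →
      (Z.mulVec (fun _ => 1) = fun _ => (K : ℝ)) →
        traceInner A Z ≤ traceInner A Zstar ∧
        (traceInner A Z = traceInner A Zstar → Z = Zstar) :=
  sdp_dual_certificate_r_clusters_general c hsize ξ hξ Zstar hZstar A B d hBnn hBpos hBZ lam S hS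
    hpsd hSξ
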